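/- Let X ⊆ B(H) be a unital operator space, (E, j) an injective extension of X, and (S, ι) an injective envelope of X. Then any unital completely contractive map φ: E → S with φ(j(x)) = ι(x) for all x ∈ X is surjective. Moreover, if E = B(H), S ⊆ B(H), and ι = id_X, then φ ∘ φ = φ, i.e., φ is a projection onto S. -/

import Mathlib

set_option synthInstance.maxHeartbeats 1000000
set_option maxHeartbeats 1000000

noncomputable section

open scoped ComplexOrder

/-- A positive operator on a complex inner-product space:
`⟪v, T v⟫ ≥ 0` for every vector `v`. -/
def IsPosOp {E : Type} [NormedAddCommGroup E] [InnerProductSpace ℂ E]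
    (T : E →L[ℂ] E) : Prop := ∀ v : E, 0 ≤ (inner ℂ v (T v) : ℂ)

/-- `B(H)`, the bounded operators on `H`. -/
abbrev BH (H : Type) [NormedAddCommGroup H] [InnerProductSpace ℂ H] : Type := H →L[ℂ] H

section Defs

variable {H K : Type}
variable [NormedAddCommGroup H] [InnerProductSpace ℂ H] [CompleteSpace H]
variable [NormedAddCommGroup K] [InnerProductSpace ℂ K] [CompleteSpace K]

/-- The amplification of a matrix over `B(H)` to an operator on the Hilbert space
`ℓ²`-direct sum of `n` copies of `H`. -/
def amp {n : ℕ} (A : Matrix (Fin n) (Fin n) (BH H)) :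
    (PiLp 2 fun _ : Fin n => H) →L[ℂ] PiLp 2 fun _ : Fin n => H :=
  ∑ i : Fin n, ∑ j : Fin n,
    ((PiLp.continuousLinearEquiv 2 ℂ fun _ : Fin n => H).symm.toContinuousLinearMap).comp
      ((ContinuousLinearMap.pi (Pi.single i (ContinuousLinearMap.id ℂ H))).comp
        ((A i j).comp
          ((ContinuousLinearMap.proj j).comp
            ((PiLp.continuousLinearEquiv 2 ℂ fun _ : Fin n => H).toContinuousLinearMap))))

/-- The matrix norms defining the (concrete) operator space structure of `B(H)`. -/
def matNorm {n : ℕ} (A : Matrix (Fin n) (Fin n) (BH H)) : ℝ := ‖amp A‖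

/-- The quotient matrix (semi)norm modulo a subset `J ⊆ B(H)`:
`‖[x i j] + Mₙ(J)‖ = inf { ‖[x i j + y i j]‖ : y i j ∈ J }`. -/
def qnorm (J : Set (BH H)) {n : ℕ} (A : Matrix (Fin n) (Fin n) (BH H)) : ℝ :=
  ⨅ B : Matrix (Fin n) (Fin n) J, matNorm (A + B.map fun b => (b : BH H))

/-- The scalar-level quotient (semi)norm modulo a subset `J ⊆ B(H)`. -/
def qnorm1 (J : Set (BH H)) (a : BH H) : ℝ := ⨅ b : J, ‖a + (b : BH H)‖

/-- A self-adjoint subspace. -/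
def StarClosed (I : Submodule ℂ (BH H)) : Prop := ∀ a ∈ I, star a ∈ I

/-- A completely contractive map defined on a subspace `X ⊆ B(H)` with values in `B(K)`. -/
def CCmap (X : Submodule ℂ (BH H)) (φ : X →ₗ[ℂ] BH K) : Prop :=
  ∀ (n : ℕ) (A : Matrix (Fin n) (Fin n) X),
    matNorm (A.map fun x => φ x) ≤ matNorm (A.map fun x => (x : BH H))

/-- A completely isometric map defined on a subspace `X ⊆ B(H)` with values in `B(K)`. -/
def CImap (X : Submodule ℂ (BH H)) (φ : X →ₗ[ℂ] BH K) : Prop :=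
  ∀ (n : ℕ) (A : Matrix (Fin n) (Fin n) X),
    matNorm (A.map fun x => φ x) = matNorm (A.map fun x => (x : BH H))

/-- A completely contractive map defined on all of `B(H)`. -/
def CCfull (φ : BH H →ₗ[ℂ] BH K) : Prop :=
  ∀ (n : ℕ) (A : Matrix (Fin n) (Fin n) (BH H)),
    matNorm (A.map fun a => φ a) ≤ matNorm A

/-- A completely positive map defined on all of `B(H)`. -/
def CPfull (φ : BH H →ₗ[ℂ] BH H) : Prop :=
  ∀ (n : ℕ) (A : Matrix (Fin n) (Fin n) (BH H)),
    IsPosOp (amp A) → IsPosOp (amp (A.map fun a => φ a))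

/-- A completely positive map defined on an operator (sub)system `S ⊆ B(H)`. -/
def CPmap (S : Submodule ℂ (BH H)) (φ : S →ₗ[ℂ] BH K) : Prop :=
  ∀ (n : ℕ) (A : Matrix (Fin n) (Fin n) S),
    IsPosOp (amp (A.map fun s => (s : BH H))) → IsPosOp (amp (A.map fun s => φ s))

/-- `J ⊆ B(K)` is boundary for `X` (embedded in `B(K)` via `j`) if the quotient map
by `J` is completely isometric on (the copy of) `X`. -/
def IsBoundarySet (X : Submodule ℂ (BH H)) (j : X →ₗ[ℂ] BH K) (J : Set (BH K)) : Prop :=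
  ∀ (n : ℕ) (A : Matrix (Fin n) (Fin n) X),
    qnorm J (A.map fun x => j x) = matNorm (A.map fun x => (x : BH H))

/-- A boundary subsystem for `X` in `B(H)`: a self-adjoint subspace on which the
quotient map is completely isometric on `X`. -/
def IsBoundary (X I : Submodule ℂ (BH H)) : Prop :=
  StarClosed I ∧ IsBoundarySet X X.subtype (I : Set (BH H))

/-- A maximal boundary subsystem for `X` in `B(H)`. -/
def IsMaximalBoundary (X I : Submodule ℂ (BH H)) : Prop :=
  IsBoundary X I ∧ ∀ J : Submodule ℂ (BH H), IsBoundary X J → I ≤ J → J = I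

/-- Complete contractivity for a linear self-map of the quotient operator space `B(H)/I`
(expressed via arbitrary representatives, as `qnorm` only depends on the classes). -/
def CCQuotEndo (I : Submodule ℂ (BH H)) (φ : (BH H ⧸ I) →ₗ[ℂ] BH H ⧸ I) : Prop :=
  ∀ (n : ℕ) (A B : Matrix (Fin n) (Fin n) (BH H)),
    (∀ i j, φ (I.mkQ (A i j)) = I.mkQ (B i j)) →
      qnorm (I : Set (BH H)) B ≤ qnorm (I : Set (BH H)) A

/-- Complete contractivity for a linear map from a subspace `Z ⊆ B(K)` into the
quotient operator space `B(H)/I`. -/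
def CCToQuot (Z : Submodule ℂ (BH K)) (I : Submodule ℂ (BH H))
    (φ : Z →ₗ[ℂ] BH H ⧸ I) : Prop :=
  ∀ (n : ℕ) (A : Matrix (Fin n) (Fin n) Z) (B : Matrix (Fin n) (Fin n) (BH H)),
    (∀ i j, I.mkQ (B i j) = φ (A i j)) →
      qnorm (I : Set (BH H)) B ≤ matNorm (A.map fun z => (z : BH K))

/-- Injectivity of a (unital) operator space `S ⊆ B(H)` in the category of operator
spaces with unital completely contractive maps. -/
def Injective (S : Submodule ℂ (BH H)) : Prop :=
  ∀ (K : Type) [NormedAddCommGroup K] [InnerProductSpace ℂ K] [CompleteSpace K],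
    ∀ (Z Y : Submodule ℂ (BH K)) (hZY : Z ≤ Y) (h1Z : (1 : BH K) ∈ Z)
      (φ : Z →ₗ[ℂ] BH H), (∀ z, φ z ∈ S) → CCmap Z φ → φ ⟨1, h1Z⟩ = 1 →
      ∃ ψ : Y →ₗ[ℂ] BH H, (∀ y, ψ y ∈ S) ∧ CCmap Y ψ ∧ ψ ⟨1, hZY h1Z⟩ = 1 ∧
        ∀ z : Z, ψ (Submodule.inclusion hZY z) = φ z

/-- `(S, ι)` is an injective envelope of the unital operator space `X`:
a unital completely isometric extension which is injective and rigid. -/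
structure IsInjEnvelope (X : Submodule ℂ (BH H)) (S : Submodule ℂ (BH K))
    (ι : X →ₗ[ℂ] BH K) : Prop where
  mem : ∀ x, ι x ∈ S
  one : (1 : BH K) ∈ S
  unital : ∀ h1 : (1 : BH H) ∈ X, ι ⟨1, h1⟩ = 1
  ci : CImap X ι
  inj : Injective S
  rigid : ∀ φ : S →ₗ[ℂ] BH K, (∀ s, φ s ∈ S) → CCmap S φ →
    (∀ x : X, φ ⟨ι x, mem x⟩ = ι x) → ∀ s : S, φ s = (s : BH K)

/-- A (closed, two-sided) ideal of the C*-subalgebra `C ⊆ B(K)`, described as a subset. -/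
def IsIdealSet (C : StarSubalgebra ℂ (BH K)) (J : Set (BH K)) : Prop :=
  J ⊆ (C : Set (BH K)) ∧ (0 : BH K) ∈ J ∧
    (∀ a ∈ J, ∀ b ∈ J, a + b ∈ J) ∧ (∀ (c : ℂ), ∀ a ∈ J, c • a ∈ J) ∧
    (∀ c ∈ C, ∀ a ∈ J, c * a ∈ J ∧ a * c ∈ J) ∧ IsClosed J

/-- A boundary ideal for `X` (embedded via `j`) in the C*-cover `C`. -/
def IsBdryIdeal (X : Submodule ℂ (BH H)) (j : X →ₗ[ℂ] BH K)
    (C : StarSubalgebra ℂ (BH K)) (J : Set (BH K)) : Prop :=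
  IsIdealSet C J ∧ IsBoundarySet X j J

/-- `(C, j)` is a C*-cover of the unital operator space `X`. -/
structure IsCstarCover (X : Submodule ℂ (BH H)) (C : StarSubalgebra ℂ (BH K))
    (j : X →ₗ[ℂ] BH K) : Prop where
  mem : ∀ x, j x ∈ C
  unital : ∀ h1 : (1 : BH H) ∈ X, j ⟨1, h1⟩ = 1
  ci : CImap X j
  gen : C = (StarAlgebra.adjoin ℂ (Set.range fun x : X => j x)).topologicalClosure

end Defs

/-! Injectivity of `E` extends `ι x ↦ j x` from `ι(X)` to a completely contractive
`σ : S → E`. Then `φ ∘ σ` is a completely contractive self-map of `S` fixing `ι(X)`, so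
rigidity makes it the identity of `S` and `φ` is onto `S`. In the second part rigidity,
applied to `φ` restricted to `S`, gives `φ s = s` for all `s ∈ S`, in particular for
`s = φ a`. -/

section OperatorSpaceMaps

variable {H K L : Type}
variable [NormedAddCommGroup H] [InnerProductSpace ℂ H]
variable [NormedAddCommGroup K] [InnerProductSpace ℂ K]
variable [NormedAddCommGroup L] [InnerProductSpace ℂ L]

theorem matNorm_of_fin_one_eq_zero_iff (a : BH H) :
    matNorm (Matrix.of fun _ _ : Fin 1 => a) = 0 ↔ a = 0 := by
  let e := PiLp.continuousLinearEquiv 2 ℂ fun _ : Fin 1 => H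
  have hamp : ∀ v, amp (Matrix.of fun _ _ : Fin 1 => a) v = e.symm (fun _ => a (e v 0)) := by
    intro v
    ext i
    fin_cases i
    simp [amp, e]
  constructor
  · intro h
    have hamp0 : amp (Matrix.of fun _ _ : Fin 1 => a) = 0 :=
      (ContinuousLinearMap.opNorm_zero_iff _).mp h
    ext w
    simpa [hamp] using congrArg (fun T => e (T (e.symm fun _ => w)) 0) hamp0
  · rintro rfl
    have hamp0 : amp (Matrix.of fun _ _ : Fin 1 => (0 : BH H)) = 0 := by
      ext v : 1
      rw [hamp]
      exact e.symm.map_zero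
    exact (ContinuousLinearMap.opNorm_zero_iff _).mpr hamp0

theorem CImap.injective {X : Submodule ℂ (BH H)} {ι : X →ₗ[ℂ] BH K} (hι : CImap X ι) :
    Function.Injective ι := by
  refine (injective_iff_map_eq_zero ι).mpr fun x hx => Subtype.ext ?_
  have h := hι 1 (Matrix.of fun _ _ => x)
  simp only [Matrix.map, Matrix.of_apply, hx] at h
  exact (matNorm_of_fin_one_eq_zero_iff _).mp (h ▸ (matNorm_of_fin_one_eq_zero_iff 0).mpr rfl)

theorem CCmap.comp_codRestrict {Y : Submodule ℂ (BH H)} {E : Submodule ℂ (BH K)}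
    {φ : E →ₗ[ℂ] BH L} {ψ : Y →ₗ[ℂ] BH K} (hφ : CCmap E φ) (hψ : CCmap Y ψ)
    (hψE : ∀ y, ψ y ∈ E) : CCmap Y (φ.comp (ψ.codRestrict E hψE)) := fun n A =>
  calc matNorm (A.map fun y => φ (ψ.codRestrict E hψE y))
      = matNorm ((A.map (ψ.codRestrict E hψE)).map fun e => φ e) := by rw [Matrix.map_map]; rfl
    _ ≤ matNorm ((A.map (ψ.codRestrict E hψE)).map fun e => (e : BH K)) := hφ n _
    _ = matNorm (A.map fun y => ψ y) := by rw [Matrix.map_map]; rfl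
    _ ≤ matNorm (A.map fun y => (y : BH H)) := hψ n A

theorem CCfull.ccmap_comp_subtype {φ : BH H →ₗ[ℂ] BH K} (hφ : CCfull φ)
    (S : Submodule ℂ (BH H)) : CCmap S (φ.comp S.subtype) := fun n A => by
  have h := hφ n (A.map fun s => (s : BH H))
  rwa [Matrix.map_map] at h

def rangeTransfer {X : Submodule ℂ (BH H)} {ι : X →ₗ[ℂ] BH K} (hι : Function.Injective ι)
    (j : X →ₗ[ℂ] BH L) : LinearMap.range ι →ₗ[ℂ] BH L :=
  j.comp (LinearEquiv.ofInjective ι hι).symm.toLinearMap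

section rangeTransfer

variable {X : Submodule ℂ (BH H)} {ι : X →ₗ[ℂ] BH K} (hι : Function.Injective ι)
  (j : X →ₗ[ℂ] BH L)

theorem rangeTransfer_apply (x : X) : rangeTransfer hι j ⟨ι x, x, rfl⟩ = j x :=
  congrArg j ((LinearEquiv.symm_apply_eq _).mpr rfl)

theorem coe_eq_apply_ofInjective_symm (z : LinearMap.range ι) :
    (z : BH K) = ι ((LinearEquiv.ofInjective ι hι).symm z) :=
  congrArg Subtype.val ((LinearEquiv.ofInjective ι hι).apply_symm_apply z).symm

theorem ccmap_rangeTransfer (hιci : CImap X ι) (hjci : CImap X j) :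
    CCmap (LinearMap.range ι) (rangeTransfer hι j) := fun n A => by
  let B := A.map (LinearEquiv.ofInjective ι hι).symm
  have hj : (A.map fun z => rangeTransfer hι j z) = B.map fun x => j x := rfl
  have hιB : (A.map fun z => (z : BH K)) = B.map fun x => ι x :=
    Matrix.ext fun _ _ => coe_eq_apply_ofInjective_symm hι _
  rw [hj, hιB, hjci n, hιci n]

end rangeTransfer

theorem Injective.exists_ccmap_extension [CompleteSpace K] {X : Submodule ℂ (BH H)}
    (h1X : (1 : BH H) ∈ X)
    {S : Submodule ℂ (BH K)} {ι : X →ₗ[ℂ] BH K} (hιS : ∀ x, ι x ∈ S)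
    (hι1 : ι ⟨1, h1X⟩ = 1) (hιci : CImap X ι)
    {E : Submodule ℂ (BH L)} (hE : Injective E) {j : X →ₗ[ℂ] BH L} (hjE : ∀ x, j x ∈ E)
    (hj1 : j ⟨1, h1X⟩ = 1) (hjci : CImap X j) :
    ∃ σ : S →ₗ[ℂ] BH L, (∀ s, σ s ∈ E) ∧ CCmap S σ ∧
      ∀ x, σ ⟨ι x, hιS x⟩ = j x := by
  have hι := hιci.injective
  have hrangeS : LinearMap.range ι ≤ S := by
    rintro _ ⟨x, rfl⟩
    exact hιS x
  have h1range : (1 : BH K) ∈ LinearMap.range ι := ⟨⟨1, h1X⟩, hι1⟩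
  have hτ1 : rangeTransfer hι j ⟨1, h1range⟩ = 1 := by
    rw [← hj1, ← rangeTransfer_apply hι j]
    simp only [hι1]
  obtain ⟨σ, hσE, hσcc, -, hσext⟩ := hE K (LinearMap.range ι) S hrangeS h1range
    (rangeTransfer hι j) (fun z => hjE _) (ccmap_rangeTransfer hι j hιci hjci) hτ1
  exact ⟨σ, hσE, hσcc, fun x =>
    (hσext ⟨ι x, x, rfl⟩).trans (rangeTransfer_apply hι j x)⟩

end OperatorSpaceMaps

/-- a ucc map from an injective extension to an injective envelope that
intertwines the embeddings of `X` is onto the envelope; moreover, if the extension is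
`B(H)` itself and the envelope sits in `B(H)` with the identity embedding, such a map is
a projection. -/
theorem onto_envelope_and_projection :
    (∀ (H K H₁ : Type)
      [NormedAddCommGroup H] [InnerProductSpace ℂ H] [CompleteSpace H]
      [NormedAddCommGroup K] [InnerProductSpace ℂ K] [CompleteSpace K]
      [NormedAddCommGroup H₁] [InnerProductSpace ℂ H₁] [CompleteSpace H₁]
      (X : Submodule ℂ (BH H)) (h1X : (1 : BH H) ∈ X)
      (E : Submodule ℂ (BH K)) (h1E : (1 : BH K) ∈ E) (j : X →ₗ[ℂ] BH K)
      (hjE : ∀ x, j x ∈ E) (hj1 : j ⟨1, h1X⟩ = 1) (hjci : CImap X j)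
      (hEinj : Injective E)
      (S : Submodule ℂ (BH H₁)) (ι : X →ₗ[ℂ] BH H₁) (env : IsInjEnvelope X S ι)
      (φ : E →ₗ[ℂ] BH H₁) (hφS : ∀ e, φ e ∈ S) (hφcc : CCmap E φ)
      (hφ1 : φ ⟨1, h1E⟩ = 1) (hint : ∀ x : X, φ ⟨j x, hjE x⟩ = ι x),
      ∀ t ∈ S, ∃ e : E, φ e = t) ∧
    (∀ (H : Type) [NormedAddCommGroup H] [InnerProductSpace ℂ H] [CompleteSpace H]
      (X S : Submodule ℂ (BH H)) (h1X : (1 : BH H) ∈ X) (hXS : X ≤ S)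
      (env : IsInjEnvelope X S (X.subtype))
      (φ : BH H →ₗ[ℂ] BH H) (hφcc : CCfull φ) (hφ1 : φ 1 = 1)
      (hφS : ∀ a, φ a ∈ S) (hφX : ∀ x ∈ X, φ x = x),
      ∀ a, φ (φ a) = φ a) := by
  constructor
  · intro H K H₁ _ _ _ _ _ _ _ _ _ X h1X E _ j hjE hj1 hjci hEinj S ι env φ hφS hφcc _ hint
    obtain ⟨σ, hσE, hσcc, hσι⟩ := hEinj.exists_ccmap_extension h1X env.mem
      (env.unital h1X) env.ci hjE hj1 hjci
    have hφσ := env.rigid (φ.comp (σ.codRestrict E hσE)) (fun _ => hφS _)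
      (hφcc.comp_codRestrict hσcc hσE) fun x =>
        (congrArg φ (Subtype.ext (hσι x))).trans (hint x)
    exact fun t ht => ⟨_, hφσ ⟨t, ht⟩⟩
  · intro H _ _ _ X S _ _ env φ hφcc _ hφS hφX a
    exact env.rigid (φ.comp S.subtype) (fun _ => hφS _) (hφcc.ccmap_comp_subtype S)
      (fun x => hφX x x.2) ⟨φ a, hφS a⟩
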